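/- arXiv:2006.16903 — 2 statements merged into one kernel-verified Lean document; each statement's English description precedes it below -/
import Mathlib

section
/- On a sphere of radius ρ, consider a spherical triangle with vertices f, q_s, q with side lengths |f q_s| = 2αε, |q_s q| = ρφ, |f q| = 2α − ρφ, and interior angle π − ν at q_s. Then the spherical law of cosines implies ρ tan φ = p²/(1 + e cos ν), where p² = ρ(cos(2αε/ρ) − cos(2α/ρ))/sin(2α/ρ) and e = sin(2αε/ρ)/sin(2α/ρ). -/
open Real

/-!
Put `a = 2α/ρ` and `b = 2αε/ρ`. Expanding `cos (a - φ)` turns the law of cosines into the linear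
relation `sin φ (sin a + sin b cos ν) = cos φ (cos b - cos a)` between `sin φ` and `cos φ`, i.e.
`tan φ = (cos b - cos a) / (sin a + sin b cos ν)`; dividing numerator and denominator by `sin a`
gives the focal equation with `p² = ρ (cos b - cos a) / sin a` and `e = sin b / sin a`.
-/

theorem sin_mul_add_eq_cos_mul_sub_of_cos_sub_eq {a b φ ν : ℝ}
    (h : cos (a - φ) = cos b * cos φ + sin b * sin φ * cos (π - ν)) :
    sin φ * (sin a + sin b * cos ν) = cos φ * (cos b - cos a) := by
  rw [cos_sub, cos_pi_sub] at h
  linear_combination h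

theorem tan_eq_div_of_sin_mul_eq_cos_mul {x n d : ℝ} (hd : d ≠ 0)
    (h : sin x * d = cos x * n) : tan x = n / d := by
  have hcos : cos x ≠ 0 := by
    intro hc
    have hsin : sin x ≠ 0 := fun hs => by simpa [hs, hc] using sin_sq_add_cos_sq x
    exact mul_ne_zero hsin hd (by rw [h, hc, zero_mul])
  rw [tan_eq_sin_div_cos, div_eq_div_iff hcos hd]
  linear_combination h

theorem div_div_one_add_div_mul {n s t c : ℝ} (hs : s ≠ 0) :
    n / s / (1 + t / s * c) = n / (s + t * c) := by
  rw [div_mul_eq_mul_div, one_add_div hs, div_div_div_cancel_right₀ hs]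

theorem spherical_conic_focal_equation_general (ρ α ε φ ν : ℝ)
    (hsin : Real.sin (2 * α / ρ) ≠ 0)
    (hden : 1 + (Real.sin (2 * α * ε / ρ) / Real.sin (2 * α / ρ)) * Real.cos ν ≠ 0)
    (hlaw : Real.cos (2 * α / ρ - φ) =
      Real.cos (2 * α * ε / ρ) * Real.cos φ +
        Real.sin (2 * α * ε / ρ) * Real.sin φ * Real.cos (π - ν)) :
    ρ * Real.tan φ =
      (ρ * ((Real.cos (2 * α * ε / ρ) - Real.cos (2 * α / ρ)) / Real.sin (2 * α / ρ))) /
        (1 + (Real.sin (2 * α * ε / ρ) / Real.sin (2 * α / ρ)) * Real.cos ν) := by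
  have hd : Real.sin (2 * α / ρ) + Real.sin (2 * α * ε / ρ) * Real.cos ν ≠ 0 := by
    rwa [div_mul_eq_mul_div, one_add_div hsin, div_ne_zero_iff, and_iff_left hsin] at hden
  rw [mul_div_assoc, div_div_one_add_div_mul hsin,
    tan_eq_div_of_sin_mul_eq_cos_mul hd (sin_mul_add_eq_cos_mul_sub_of_cos_sub_eq hlaw)]

/-- Spherical focal equation: for a spherical triangle with vertices `f, q_s, q`, sides of
angular lengths `2αε/ρ` (from `f` to `q_s`), `φ` (from `q_s` to `q`), `2α/ρ − φ` (from `f`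
to `q`), and interior angle `π − ν` at `q_s`, the spherical law of cosines implies
`ρ tan φ = p²/(1 + e cos ν)` with `p² = ρ(cos(2αε/ρ) − cos(2α/ρ))/sin(2α/ρ)` and
`e = sin(2αε/ρ)/sin(2α/ρ)`. -/
theorem spherical_conic_focal_equation (ρ α ε φ ν : ℝ) (hρ : 0 < ρ)
    (hsin : Real.sin (2 * α / ρ) ≠ 0) (hcosφ : Real.cos φ ≠ 0)
    (hden : 1 + (Real.sin (2 * α * ε / ρ) / Real.sin (2 * α / ρ)) * Real.cos ν ≠ 0)
    (hlaw : Real.cos (2 * α / ρ - φ) =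
      Real.cos (2 * α * ε / ρ) * Real.cos φ +
        Real.sin (2 * α * ε / ρ) * Real.sin φ * Real.cos (π - ν)) :
    ρ * Real.tan φ =
      (ρ * ((Real.cos (2 * α * ε / ρ) - Real.cos (2 * α / ρ)) / Real.sin (2 * α / ρ))) /
        (1 + (Real.sin (2 * α * ε / ρ) / Real.sin (2 * α / ρ)) * Real.cos ν) :=
  spherical_conic_focal_equation_general ρ α ε φ ν hsin hden hlaw
end

section
/- Define H(G_c) = −m³M²/(2G_c²) + κ·G_c²/(2m) for G_c > 0, where κ = 1/ρ². Let φ_c ∈ (0, π/4) be determined by G_c² = ρ m² M tan φ_c. Then H(G_c) = −(mM/ρ)·cot(2φ_c), and furthermore T(H)/(2π) · dH/dG_c = 1, where T(H) = 2π m ρ² sin²φ_c / G_c. -/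
open Real

/-- Key computation for curved Delaunay coordinates. With
`H(G_c) = −m³M²/(2G_c²) + κ G_c²/(2m)`, `κ = 1/ρ²`, and `G_c² = ρ m² M tan φ_c` for
`φ_c ∈ (0, π/4)`: one has `H(G_c) = −(mM/ρ) cot(2φ_c)` and
`dH/dG_c = G_c/(m ρ² sin² φ_c)`, i.e. `(T(H)/2π)·dH/dG_c = 1` for
`T(H) = 2π m ρ² sin² φ_c/G_c`. -/
theorem curved_delaunay_action (m M ρ Gc φc : ℝ) (hm : 0 < m) (hM : 0 < M) (hρ : 0 < ρ)
    (hGc : 0 < Gc) (hφc : φc ∈ Set.Ioo 0 (π / 4))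
    (hGc2 : Gc ^ 2 = ρ * m ^ 2 * M * Real.tan φc) :
    (-m ^ 3 * M ^ 2 / (2 * Gc ^ 2) + (1 / ρ ^ 2) * Gc ^ 2 / (2 * m)
        = -(m * M / ρ) * Real.cot (2 * φc)) ∧
    HasDerivAt (fun G : ℝ => -m ^ 3 * M ^ 2 / (2 * G ^ 2) + (1 / ρ ^ 2) * G ^ 2 / (2 * m))
      (Gc / (m * ρ ^ 2 * Real.sin φc ^ 2)) Gc ∧
    (2 * π * m * ρ ^ 2 * Real.sin φc ^ 2 / Gc) / (2 * π) *
        (Gc / (m * ρ ^ 2 * Real.sin φc ^ 2)) = 1 := by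
  obtain ⟨hφ0, hφ4⟩ := hφc
  have hπ := Real.pi_pos
  have hs : 0 < Real.sin φc := Real.sin_pos_of_pos_of_lt_pi hφ0 (by linarith)
  have hc : 0 < Real.cos φc := Real.cos_pos_of_mem_Ioo ⟨by linarith, by linarith⟩
  have htan : Real.tan φc = Real.sin φc / Real.cos φc := Real.tan_eq_sin_div_cos φc
  have hpy : Real.sin φc ^ 2 + Real.cos φc ^ 2 = 1 := Real.sin_sq_add_cos_sq φc
  have hGc2' : Gc ^ 2 * Real.cos φc = ρ * m ^ 2 * M * Real.sin φc := by
    rw [htan] at hGc2; field_simp at hGc2; linarith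
  have hs2 : Real.sin (2 * φc) = 2 * Real.sin φc * Real.cos φc := Real.sin_two_mul φc
  have hc2 : Real.cos (2 * φc) = Real.cos φc ^ 2 - Real.sin φc ^ 2 := Real.cos_two_mul' φc
  refine ⟨?_, ?_, ?_⟩
  · rw [Real.cot_eq_cos_div_sin, hs2, hc2]
    field_simp
    linear_combination (Gc ^ 2 * Real.sin φc + ρ * m ^ 2 * M * Real.cos φc) * hGc2'
  · have hpow : HasDerivAt (fun G : ℝ => G ^ 2) (2 * Gc) Gc := by
      simpa using hasDerivAt_pow 2 Gc
    have ha : HasDerivAt (fun G : ℝ => -m ^ 3 * M ^ 2 / (2 * G ^ 2)) (m ^ 3 * M ^ 2 / Gc ^ 3) Gc := by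
      have h := (hasDerivAt_const Gc (-m ^ 3 * M ^ 2)).div (hpow.const_mul 2)
        (by positivity)
      refine h.congr_deriv (Eq.symm ?_)
      field_simp
      ring
    have hb : HasDerivAt (fun G : ℝ => (1 / ρ ^ 2) * G ^ 2 / (2 * m)) ((1 / ρ ^ 2) * Gc / m) Gc := by
      have h := ((hpow.const_mul (1 / ρ ^ 2)).div_const (2 * m))
      refine h.congr_deriv (Eq.symm ?_)
      field_simp
    have hsum := ha.add hb
    refine hsum.congr_deriv (Eq.symm ?_)
    have h4 : Gc ^ 4 * Real.cos φc ^ 2 = ρ ^ 2 * m ^ 4 * M ^ 2 * Real.sin φc ^ 2 := by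
      linear_combination (Gc ^ 2 * Real.cos φc + ρ * m ^ 2 * M * Real.sin φc) * hGc2'
    field_simp
    linear_combination h4 - Gc ^ 4 * hpy
  · field_simp
end
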